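/- Let 0 < β < 1, 1 ≤ q < ∞ with βq > N, and suppose ψ ∈ L^q(ℝ^N) satisfies sup_{|h|>0} ‖δ_h ψ / |h|^β‖_{L^q(ℝ^N)} < ∞. Then for every 0 < α < β − N/q, ψ has a representative satisfying sup_{x≠y} |ψ(x)−ψ(y)|/|x−y|^α ≤ C ([ψ]_{N^{β,q}_∞})^{(αq+N)/(βq)} (‖ψ‖_{L^q})^{((β−α)q−N)/(βq)} for some constant C = C(N,q,α,β). -/

import Mathlib

open MeasureTheory

/-- The Besov–Nikolskii seminorm
`[ψ]_{N^{β,q}_∞(ℝ^N)} = sup_{|h|>0} ‖δ_h ψ/|h|^β‖_{L^q(ℝ^N)}` (valued in `ℝ≥0∞`). -/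
noncomputable def nikolskiiSemi {N : ℕ} (β : ℝ) (p : ENNReal)
    (ψ : EuclideanSpace ℝ (Fin N) → ℝ) : ENNReal :=
  ⨆ h : {h : EuclideanSpace ℝ (Fin N) // h ≠ 0},
    eLpNorm (fun x => (ψ (x + h.1) - ψ x) / ‖h.1‖ ^ β) p volume

/-!
Campanato's argument. Let `φ_r(x)` be the mean of `φ` over the closed ball `B(x, r)` and
`γ = β - N/q`. Averaging the bound `‖φ(· + k) - φ‖_q ≤ |k|^β [φ]` over the translations `k` in a
ball and applying Hölder's inequality gives `|φ_s(x) - φ_r(y)| ≲ r^γ [φ]` whenever `s ≤ r ≤ 2s`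
and `|x - y| ≤ r`. Summing over dyadic radii, `φ_r(x)` converges as `r → 0` at the rate `r^γ [φ]`,
uniformly in `x`. By Lebesgue's differentiation theorem the limit `ψ'` is a representative of `φ`,
and comparing `ψ'(x)` and `ψ'(y)` with `φ_r(x)` and `φ_r(y)` gives
`|ψ'(x) - ψ'(y)| ≲ |x - y|^γ [φ]` and `|ψ'(x) - ψ'(y)| ≲ r^γ [φ] + r^(-N/q) ‖φ‖_q` for every `r`,
since `|φ_r| ≲ r^(-N/q) ‖φ‖_q` by Hölder. The interpolation estimate follows by choosing between
the two bounds at the scale `r = (‖φ‖_q / [φ])^(1/β)` where the two terms of the second are equal.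
-/

open Metric Filter Topology Module
open scoped ENNReal

theorem abs_sub_le_of_abs_sub_le_of_le_two_mul {G : ℝ → ℝ} {K γ : ℝ} (hK : 0 ≤ K) (hγ : 0 < γ)
    (hG : ∀ u t, 0 < u → u ≤ t → t ≤ 2 * u → |G u - G t| ≤ K * t ^ γ) {u t : ℝ}
    (hu : 0 < u) (hut : u ≤ t) :
    |G u - G t| ≤ K / (1 - 2⁻¹ ^ γ) * t ^ γ := by
  have hhalf : (2⁻¹ : ℝ) ^ γ < 1 := Real.rpow_lt_one (by norm_num) (by norm_num) hγ
  set K₂ := K / (1 - 2⁻¹ ^ γ)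
  have hK₂ : K₂ * 2⁻¹ ^ γ + K = K₂ := by
    have : (1:ℝ) - 2⁻¹ ^ γ ≠ 0 := by linarith
    linear_combination -(div_mul_cancel₀ K this)
  have hKK₂ : K ≤ K₂ := by
    have : 0 ≤ K₂ * 2⁻¹ ^ γ := mul_nonneg (div_nonneg hK (by linarith)) (by positivity)
    linarith
  suffices ∀ m : ℕ, ∀ t, u ≤ t → t ≤ 2 ^ m * (2 * u) → |G u - G t| ≤ K₂ * t ^ γ by
    obtain ⟨m, hm⟩ := pow_unbounded_of_one_lt (t / (2 * u)) one_lt_two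
    exact this m t hut (by rw [div_lt_iff₀ (by positivity)] at hm; linarith)
  intro m
  induction m with
  | zero =>
    intro t hut ht
    exact (hG u t hu hut (by simpa using ht)).trans
      (mul_le_mul_of_nonneg_right hKK₂ (Real.rpow_nonneg (hu.le.trans hut) γ))
  | succ m ih =>
    intro t hut ht
    have ht0 : 0 < t := hu.trans_le hut
    by_cases hclose : t ≤ 2 * u
    · exact (hG u t hu hut hclose).trans
        (mul_le_mul_of_nonneg_right hKK₂ (Real.rpow_nonneg ht0.le γ))
    have hmid := ih (t / 2) (by linarith) (by rw [pow_succ] at ht; linarith)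
    have hlast := hG (t / 2) t (by linarith) (by linarith) (by linarith)
    have hscale : (t / 2) ^ γ = 2⁻¹ ^ γ * t ^ γ := by
      rw [div_eq_inv_mul, Real.mul_rpow (by norm_num) ht0.le]
    calc |G u - G t| ≤ |G u - G (t / 2)| + |G (t / 2) - G t| := abs_sub_le _ _ _
      _ ≤ K₂ * (t / 2) ^ γ + K * t ^ γ := add_le_add hmid hlast
      _ = K₂ * t ^ γ := by rw [hscale]; linear_combination t ^ γ * hK₂

theorem exists_tendsto_nhdsGT_zero_of_abs_sub_le {G : ℝ → ℝ} {C γ : ℝ} (hγ : 0 < γ)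
    (hG : ∀ u t, 0 < u → u ≤ t → |G u - G t| ≤ C * t ^ γ) :
    ∃ L, Tendsto G (𝓝[>] 0) (𝓝 L) ∧ ∀ r, 0 < r → |L - G r| ≤ C * r ^ γ := by
  have hsmall : Tendsto (fun t : ℝ => C * t ^ γ) (𝓝[>] 0) (𝓝 0) := by
    have := ((Real.continuousAt_rpow_const 0 γ (Or.inr hγ.le)).tendsto.const_mul C)
    simpa [Real.zero_rpow hγ.ne'] using this.mono_left nhdsWithin_le_nhds
  have hcauchy : Cauchy (map G (𝓝[>] 0)) := by
    refine Metric.cauchy_iff.2 ⟨inferInstance, fun ε hε => ?_⟩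
    obtain ⟨δ, hδε, hδ⟩ := ((hsmall.eventually (gt_mem_nhds (half_pos hε))).and
      self_mem_nhdsWithin).exists
    refine ⟨G '' Set.Ioo 0 δ, image_mem_map (Ioo_mem_nhdsGT hδ), ?_⟩
    rintro _ ⟨u, hu, rfl⟩ _ ⟨v, hv, rfl⟩
    calc dist (G u) (G v) ≤ |G u - G δ| + |G v - G δ| := by
          rw [Real.dist_eq]; exact (abs_sub_le _ _ _).trans (by rw [abs_sub_comm (G δ)])
      _ ≤ C * δ ^ γ + C * δ ^ γ :=
          add_le_add (hG u δ hu.1 hu.2.le) (hG v δ hv.1 hv.2.le)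
      _ < ε := by linarith
  obtain ⟨L, hL⟩ := cauchy_map_iff_exists_tendsto.1 hcauchy
  refine ⟨L, hL, fun r hr => ?_⟩
  refine le_of_tendsto ((hL.sub_const (G r)).abs) ?_
  filter_upwards [Ioo_mem_nhdsGT hr] with u hu using hG u r hu.1 hu.2.le

theorem le_mul_rpow_of_le_of_forall_le_of_pos {X A B K d α β γ : ℝ} (hA : 0 < A) (hB : 0 < B)
    (hK : 0 ≤ K) (hd : 0 < d) (hβ : 0 < β) (hα : 0 ≤ α) (hαγ : α ≤ γ)
    (hsmall : X ≤ K * d ^ γ * B) (hlarge : ∀ r, 0 < r → X ≤ K * (r ^ γ * B + r ^ (γ - β) * A)) :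
    X ≤ 2 * K * B ^ (1 - (γ - α) / β) * A ^ ((γ - α) / β) * d ^ α := by
  set r₀ := (A / B) ^ β⁻¹
  have hr₀ : 0 < r₀ := by positivity
  have hr₀β : r₀ ^ β * B = A := by
    rw [← Real.rpow_mul (by positivity), inv_mul_cancel₀ hβ.ne', Real.rpow_one,
      div_mul_cancel₀ _ hB.ne']
  have hr₀γα : r₀ ^ (γ - α) * B = B ^ (1 - (γ - α) / β) * A ^ ((γ - α) / β) := by
    rw [← Real.rpow_mul (by positivity), Real.div_rpow hA.le hB.le, Real.rpow_sub hB,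
      Real.rpow_one]
    field_simp
  suffices X ≤ 2 * K * d ^ α * (r₀ ^ (γ - α) * B) by rw [hr₀γα] at this; linarith
  rcases le_total d r₀ with hdr | hrd
  · calc X ≤ K * d ^ γ * B := hsmall
      _ = K * d ^ α * (d ^ (γ - α) * B) := by
        rw [← mul_assoc, mul_assoc K (d ^ α), ← Real.rpow_add hd, add_sub_cancel]
      _ ≤ K * d ^ α * (r₀ ^ (γ - α) * B) := by gcongr
      _ ≤ 2 * K * d ^ α * (r₀ ^ (γ - α) * B) := by
        have : 0 ≤ K * d ^ α * (r₀ ^ (γ - α) * B) := by positivity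
        linarith
  · calc X ≤ K * (r₀ ^ γ * B + r₀ ^ (γ - β) * A) := hlarge r₀ hr₀
      _ = 2 * K * r₀ ^ α * (r₀ ^ (γ - α) * B) := by
        rw [← hr₀β, Real.rpow_sub hr₀, Real.rpow_sub hr₀]
        field_simp
        ring
      _ ≤ 2 * K * d ^ α * (r₀ ^ (γ - α) * B) := by gcongr

theorem le_mul_rpow_of_le_of_forall_le {X A B K d α β γ : ℝ} (hA : 0 ≤ A) (hB : 0 ≤ B)
    (hK : 0 ≤ K) (hd : 0 < d) (hβ : 0 < β) (hα : 0 ≤ α) (hαγ : α < γ)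
    (hsmall : X ≤ K * d ^ γ * B) (hlarge : ∀ r, 0 < r → X ≤ K * (r ^ γ * B + r ^ (γ - β) * A)) :
    X ≤ 2 * K * B ^ (1 - (γ - α) / β) * A ^ ((γ - α) / β) * d ^ α := by
  have hRHS : 0 ≤ 2 * K * B ^ (1 - (γ - α) / β) * A ^ ((γ - α) / β) * d ^ α := by positivity
  rcases hB.eq_or_lt with rfl | hB
  · exact (hsmall.trans_eq (mul_zero _)).trans hRHS
  rcases hA.eq_or_lt with rfl | hA
  · have hlim : Tendsto (fun r : ℝ => K * (r ^ γ * B + r ^ (γ - β) * 0)) (𝓝[>] 0) (𝓝 0) := by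
      have := (((Real.continuousAt_rpow_const 0 γ (Or.inr (hα.trans_lt hαγ).le)).tendsto.mul_const
        B).const_mul K).mono_left (nhdsWithin_le_nhds (s := Set.Ioi 0))
      simpa [Real.zero_rpow (hα.trans_lt hαγ).ne'] using this
    exact (ge_of_tendsto hlim (eventually_nhdsWithin_of_forall hlarge)).trans hRHS
  exact le_mul_rpow_of_le_of_forall_le_of_pos hA hB hK hd hβ hα hαγ.le hsmall hlarge

section LebesgueIntegral

variable {Ω F : Type*} [MeasurableSpace Ω] {μ : Measure Ω} [NormedAddCommGroup F]

theorem setLIntegral_enorm_le_measure_rpow_mul_eLpNorm {f : Ω → F} {q : ℝ} (hq : 1 ≤ q)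
    (hf : AEStronglyMeasurable f μ) (s : Set Ω) :
    ∫⁻ z in s, ‖f z‖ₑ ∂μ ≤ μ s ^ (1 - 1 / q) * eLpNorm f (ENNReal.ofReal q) μ := by
  have h := eLpNorm_le_eLpNorm_mul_rpow_measure_univ (μ := μ.restrict s)
    (ENNReal.one_le_ofReal.2 hq) hf.restrict
  rw [eLpNorm_one_eq_lintegral_enorm, Measure.restrict_apply_univ,
    ENNReal.toReal_ofReal (by linarith), ENNReal.toReal_one, div_one, mul_comm] at h
  exact h.trans (mul_le_mul_right (eLpNorm_mono_measure f Measure.restrict_le_self) _)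

theorem enorm_setAverage_sub_le [NormedSpace ℝ F] [CompleteSpace F] {f : Ω → F} {s : Set Ω}
    (hf : IntegrableOn f s μ) (hs₀ : μ s ≠ 0) (hs : μ s ≠ ∞) (c : F) :
    ‖(⨍ z in s, f z ∂μ) - c‖ₑ ≤ (μ s)⁻¹ * ∫⁻ z in s, ‖f z - c‖ₑ ∂μ := by
  have hc : IntegrableOn (fun _ => c) s μ := integrableOn_const hs
  have hsub : (⨍ z in s, f z ∂μ) - c = ⨍ z in s, (f z - c) ∂μ := by
    rw [setAverage_eq, setAverage_eq, integral_sub hf hc, smul_sub, ← setAverage_eq,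
      ← setAverage_eq, setAverage_const hs₀ hs]
  rw [hsub, setAverage_eq, enorm_smul, measureReal_def, ← ENNReal.toReal_inv,
    Real.enorm_of_nonneg ENNReal.toReal_nonneg, ENNReal.ofReal_toReal (by simpa using hs₀)]
  exact mul_le_mul_right (enorm_integral_le_lintegral_enorm _) _

end LebesgueIntegral

theorem measureReal_closedBall_pos {X : Type*} [PseudoMetricSpace X] [ProperSpace X]
    [MeasurableSpace X] (μ : Measure X) [μ.IsOpenPosMeasure] [IsFiniteMeasureOnCompacts μ]
    (x : X) {r : ℝ} (hr : 0 < r) : 0 < μ.real (closedBall x r) :=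
  ENNReal.toReal_pos (measure_closedBall_pos μ x hr).ne' measure_closedBall_lt_top.ne

section HaarMeasure

variable {E : Type*} [NormedAddCommGroup E] [NormedSpace ℝ E] [FiniteDimensional ℝ E]
  [MeasurableSpace E] [BorelSpace E] {μ : Measure E} [μ.IsAddHaarMeasure]
  {φ : E → ℝ} {q β B : ℝ}

def NikolskiiBounded (μ : Measure E) (q β B : ℝ) (φ : E → ℝ) : Prop :=
  ∀ k, eLpNorm (fun v => φ (v + k) - φ v) (ENNReal.ofReal q) μ ≤ ENNReal.ofReal (‖k‖ ^ β * B)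

theorem lintegral_lintegral_enorm_sub_translate_le (hq : 1 ≤ q) (hβ : 0 ≤ β) (hB₀ : 0 ≤ B)
    (hφ : Measurable φ)
    (hB : NikolskiiBounded μ q β B φ)
    (s : Set E) (ρ : ℝ) :
    ∫⁻ v in s, ∫⁻ k in closedBall 0 ρ, ‖φ (v + k) - φ v‖ₑ ∂μ ∂μ
      ≤ μ (closedBall 0 ρ) * (μ s ^ (1 - 1 / q) * ENNReal.ofReal (ρ ^ β * B)) := by
  have hmeas : Measurable fun p : E × E => ‖φ (p.1 + p.2) - φ p.1‖ₑ :=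
    ((hφ.comp (measurable_fst.add measurable_snd)).sub (hφ.comp measurable_fst)).enorm
  rw [lintegral_lintegral_swap hmeas.aemeasurable, mul_comm, ← setLIntegral_const]
  refine setLIntegral_mono measurable_const fun k hk => ?_
  have hk : ‖k‖ ≤ ρ := by simpa using hk
  calc ∫⁻ v in s, ‖φ (v + k) - φ v‖ₑ ∂μ
      ≤ μ s ^ (1 - 1 / q) * eLpNorm (fun v => φ (v + k) - φ v) (ENNReal.ofReal q) μ :=
        setLIntegral_enorm_le_measure_rpow_mul_eLpNorm hq
          ((hφ.comp (measurable_add_const k)).sub hφ).aestronglyMeasurable s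
    _ ≤ μ s ^ (1 - 1 / q) * ENNReal.ofReal (ρ ^ β * B) := by
        gcongr
        exact (hB k).trans (ENNReal.ofReal_le_ofReal (by gcongr))

theorem enorm_setAverage_closedBall_sub_le (hφ : LocallyIntegrable φ μ) {x v : E} {r ρ : ℝ}
    (hr : 0 < r) (hρ : dist x v + r ≤ ρ) :
    ‖(⨍ z in closedBall x r, φ z ∂μ) - φ v‖ₑ
      ≤ (μ (closedBall x r))⁻¹ * ∫⁻ k in closedBall 0 ρ, ‖φ (v + k) - φ v‖ₑ ∂μ := by
  refine (enorm_setAverage_sub_le (hφ.integrableOn_isCompact (isCompact_closedBall x r))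
    (measure_closedBall_pos μ x hr).ne' measure_closedBall_lt_top.ne (φ v)).trans ?_
  gcongr (μ (closedBall x r))⁻¹ * ?_
  have hpre : (v + ·) ⁻¹' closedBall x r ⊆ closedBall 0 ρ := fun k hk => by
    simp only [Set.mem_preimage, mem_closedBall, dist_eq_norm, sub_zero] at hk ⊢
    calc ‖k‖ = ‖(v + k - x) + (x - v)‖ := by congr 1; abel
      _ ≤ ‖v + k - x‖ + ‖x - v‖ := norm_add_le _ _
      _ ≤ ρ := by rw [dist_eq_norm] at hρ; linarith
  rw [← (measurePreserving_add_left μ v).setLIntegral_comp_preimage_emb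
    (measurableEmbedding_addLeft v)]
  exact lintegral_mono_set hpre

theorem enorm_setAverage_sub_setAverage_le (hq : 1 ≤ q) (hβ : 0 ≤ β) (hB₀ : 0 ≤ B)
    (hφ : Measurable φ) (hφi : LocallyIntegrable φ μ)
    (hB : NikolskiiBounded μ q β B φ)
    {x y : E} {r s : ℝ} (hr : 0 < r) (hs : 0 < s) :
    ‖(⨍ z in closedBall x r, φ z ∂μ) - ⨍ z in closedBall y s, φ z ∂μ‖ₑ
      ≤ (μ (closedBall y s))⁻¹ * ((μ (closedBall x r))⁻¹ * (μ (closedBall 0 (dist x y + r + s))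
        * (μ (closedBall y s) ^ (1 - 1 / q) * ENNReal.ofReal ((dist x y + r + s) ^ β * B)))) := by
  set a := ⨍ z in closedBall x r, φ z ∂μ
  set ρ := dist x y + r + s
  have hpoint : ∀ v ∈ closedBall y s, ‖φ v - a‖ₑ
      ≤ (μ (closedBall x r))⁻¹ * ∫⁻ k in closedBall 0 ρ, ‖φ (v + k) - φ v‖ₑ ∂μ := by
    intro v hv
    rw [enorm_sub_rev]
    refine enorm_setAverage_closedBall_sub_le hφi hr ?_
    have := dist_triangle x y v
    rw [mem_closedBall, dist_comm] at hv
    linarith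
  rw [enorm_sub_rev]
  refine (enorm_setAverage_sub_le (hφi.integrableOn_isCompact (isCompact_closedBall y s))
    (measure_closedBall_pos μ y hs).ne' measure_closedBall_lt_top.ne a).trans ?_
  gcongr (μ (closedBall y s))⁻¹ * ?_
  calc ∫⁻ v in closedBall y s, ‖φ v - a‖ₑ ∂μ
      ≤ ∫⁻ v in closedBall y s,
          (μ (closedBall x r))⁻¹ * ∫⁻ k in closedBall 0 ρ, ‖φ (v + k) - φ v‖ₑ ∂μ ∂μ :=
        setLIntegral_mono' measurableSet_closedBall hpoint
    _ = (μ (closedBall x r))⁻¹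
          * ∫⁻ v in closedBall y s, ∫⁻ k in closedBall 0 ρ, ‖φ (v + k) - φ v‖ₑ ∂μ ∂μ :=
        lintegral_const_mul' _ _ (ENNReal.inv_ne_top.2 (measure_closedBall_pos μ x hr).ne')
    _ ≤ _ := by
        gcongr
        exact lintegral_lintegral_enorm_sub_translate_le hq hβ hB₀ hφ hB _ ρ

theorem measureReal_closedBall_rpow_neg (x : E) {r : ℝ} (hr : 0 < r) (q : ℝ) :
    μ.real (closedBall x r) ^ (-(1 / q))
      = μ.real (closedBall 0 1) ^ (-(1 / q)) * r ^ (-(finrank ℝ E / q)) := by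
  rw [Measure.addHaar_real_closedBall' μ x hr.le, Real.mul_rpow (by positivity) measureReal_nonneg,
    ← Real.rpow_natCast, ← Real.rpow_mul hr.le, mul_comm]
  ring_nf

theorem abs_setAverage_sub_setAverage_le (hq : 1 ≤ q) (hβ : 0 ≤ β) (hB₀ : 0 ≤ B)
    (hφ : Measurable φ) (hφi : LocallyIntegrable φ μ)
    (hB : NikolskiiBounded μ q β B φ)
    {x y : E} {r s : ℝ} (hr : 0 < r) (hs : 0 < s) :
    |(⨍ z in closedBall x r, φ z ∂μ) - ⨍ z in closedBall y s, φ z ∂μ|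
      ≤ ((dist x y + r + s) / r) ^ finrank ℝ E * μ.real (closedBall y s) ^ (-(1 / q))
        * (dist x y + r + s) ^ β * B := by
  have hρ : 0 < dist x y + r + s := by positivity
  have h := ENNReal.toReal_mono ?_
    (enorm_setAverage_sub_setAverage_le hq hβ hB₀ hφ hφi hB (μ := μ) (x := x) (y := y) hr hs)
  · simp only [ENNReal.toReal_mul, ENNReal.toReal_inv, ← ENNReal.toReal_rpow, ← measureReal_def,
      toReal_enorm, Real.norm_eq_abs,
      ENNReal.toReal_ofReal (by positivity : 0 ≤ (dist x y + r + s) ^ β * B)] at h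
    refine h.trans_eq ?_
    have hVs : 0 < μ.real (closedBall y s) := measureReal_closedBall_pos μ y hs
    have hc : 0 < μ.real (closedBall (0 : E) 1) := measureReal_closedBall_pos μ 0 one_pos
    rw [Measure.addHaar_real_closedBall' μ x hr.le, Measure.addHaar_real_closedBall' μ 0 hρ.le,
      sub_eq_add_neg, Real.rpow_add hVs, Real.rpow_one, div_pow]
    field_simp
  · have h1q : 0 ≤ 1 - 1 / q := sub_nonneg.2 (div_le_one_of_le₀ hq (by linarith))
    exact ENNReal.mul_ne_top (ENNReal.inv_ne_top.2 (measure_closedBall_pos μ y hs).ne')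
      (ENNReal.mul_ne_top (ENNReal.inv_ne_top.2 (measure_closedBall_pos μ x hr).ne')
        (ENNReal.mul_ne_top measure_closedBall_lt_top.ne
          (ENNReal.mul_ne_top (ENNReal.rpow_ne_top_of_nonneg h1q measure_closedBall_lt_top.ne)
            ENNReal.ofReal_ne_top)))

theorem abs_setAverage_sub_setAverage_le_of_le_two_mul (hq : 1 ≤ q) (hβ : 0 ≤ β) (hB₀ : 0 ≤ B)
    (hφ : Measurable φ) (hφi : LocallyIntegrable φ μ)
    (hB : NikolskiiBounded μ q β B φ)
    {x y : E} {u t : ℝ} (hu : 0 < u) (hut : u ≤ t) (htu : t ≤ 2 * u) (hxy : dist x y ≤ t) :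
    |(⨍ z in closedBall x u, φ z ∂μ) - ⨍ z in closedBall y t, φ z ∂μ|
      ≤ 6 ^ finrank ℝ E * 3 ^ β * μ.real (closedBall 0 1) ^ (-(1 / q)) * B
        * t ^ (β - finrank ℝ E / q) := by
  have ht : 0 < t := hu.trans_le hut
  set ρ := dist x y + u + t
  calc _ ≤ (ρ / u) ^ finrank ℝ E * μ.real (closedBall y t) ^ (-(1 / q)) * ρ ^ β * B :=
        abs_setAverage_sub_setAverage_le hq hβ hB₀ hφ hφi hB hu ht
    _ = (ρ / u) ^ finrank ℝ E * ρ ^ β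
          * (μ.real (closedBall 0 1) ^ (-(1 / q)) * t ^ (-(finrank ℝ E / q)) * B) := by
        rw [measureReal_closedBall_rpow_neg y ht]; ring
    _ ≤ 6 ^ finrank ℝ E * (3 * t) ^ β
          * (μ.real (closedBall 0 1) ^ (-(1 / q)) * t ^ (-(finrank ℝ E / q)) * B) := by
        have : 0 ≤ ρ := by positivity
        gcongr
        · rw [div_le_iff₀ hu]; linarith
        · linarith
    _ = _ := by
        rw [Real.mul_rpow (by norm_num) ht.le, sub_eq_add_neg, Real.rpow_add ht]; ring

theorem abs_setAverage_le (hq : 1 ≤ q) (hφ : MemLp φ (ENNReal.ofReal q) μ) (x : E) {r : ℝ}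
    (hr : 0 < r) :
    |⨍ z in closedBall x r, φ z ∂μ|
      ≤ μ.real (closedBall 0 1) ^ (-(1 / q)) * r ^ (-(finrank ℝ E / q))
        * (eLpNorm φ (ENNReal.ofReal q) μ).toReal := by
  have hV := measureReal_closedBall_pos μ x hr
  have h := enorm_setAverage_sub_le ((hφ.locallyIntegrable (ENNReal.one_le_ofReal.2 hq))
    |>.integrableOn_isCompact (isCompact_closedBall x r)) (measure_closedBall_pos μ x hr).ne'
    measure_closedBall_lt_top.ne 0
  simp only [sub_zero] at h
  replace h := h.trans (mul_le_mul_right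
    (setLIntegral_enorm_le_measure_rpow_mul_eLpNorm hq hφ.1 (closedBall x r)) _)
  have h1q : 0 ≤ 1 - 1 / q := sub_nonneg.2 (div_le_one_of_le₀ hq (by linarith))
  replace h := ENNReal.toReal_mono (ENNReal.mul_ne_top
    (ENNReal.inv_ne_top.2 (measure_closedBall_pos μ x hr).ne')
    (ENNReal.mul_ne_top (ENNReal.rpow_ne_top_of_nonneg h1q measure_closedBall_lt_top.ne)
      hφ.eLpNorm_ne_top)) h
  simp only [ENNReal.toReal_mul, ENNReal.toReal_inv, ← ENNReal.toReal_rpow, ← measureReal_def,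
    toReal_enorm, Real.norm_eq_abs] at h
  refine h.trans_eq ?_
  rw [← measureReal_closedBall_rpow_neg x hr, sub_eq_add_neg, Real.rpow_add hV, Real.rpow_one]
  field_simp

theorem exists_ae_eq_abs_sub_setAverage_le (hq : 1 ≤ q) (hβ : 0 ≤ β) (hB₀ : 0 ≤ B)
    (hφ : Measurable φ) (hφi : LocallyIntegrable φ μ)
    (hB : NikolskiiBounded μ q β B φ)
    (hγ : 0 < β - finrank ℝ E / q) :
    ∃ ψ : E → ℝ, ψ =ᵐ[μ] φ ∧ ∀ x r, 0 < r → |ψ x - ⨍ z in closedBall x r, φ z ∂μ|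
      ≤ 6 ^ finrank ℝ E * 3 ^ β * μ.real (closedBall 0 1) ^ (-(1 / q)) * B
        / (1 - 2⁻¹ ^ (β - finrank ℝ E / q)) * r ^ (β - finrank ℝ E / q) := by
  have hlim x := exists_tendsto_nhdsGT_zero_of_abs_sub_le hγ fun u t hu hut =>
    abs_sub_le_of_abs_sub_le_of_le_two_mul (G := fun r => ⨍ z in closedBall x r, φ z ∂μ)
      (by positivity) hγ (fun u t hu hut htu => abs_setAverage_sub_setAverage_le_of_le_two_mul
        hq hβ hB₀ hφ hφi hB hu hut htu (by simpa using (hu.trans_le hut).le)) hu hut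
  choose ψ hψ using hlim
  refine ⟨ψ, ?_, fun x r hr => (hψ x).2 r hr⟩
  filter_upwards [IsUnifLocDoublingMeasure.ae_tendsto_average μ hφi 1] with x hx
  refine tendsto_nhds_unique (hψ x).1 (hx (fun _ => x) id tendsto_id ?_)
  filter_upwards [self_mem_nhdsWithin] with r hr
  simpa using hr.le

theorem exists_ae_eq_abs_sub_le_of_nikolskiiBounded (hq : 1 ≤ q) (hβ : 0 ≤ β) (hB₀ : 0 ≤ B)
    (hφ : Measurable φ) (hφq : MemLp φ (ENNReal.ofReal q) μ) (hB : NikolskiiBounded μ q β B φ)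
    (hγ : 0 < β - finrank ℝ E / q) :
    ∃ K > (0 : ℝ), ∃ ψ : E → ℝ, ψ =ᵐ[μ] φ ∧
      (∀ x y, x ≠ y → |ψ x - ψ y| ≤ K * dist x y ^ (β - finrank ℝ E / q) * B) ∧
      ∀ x y r, 0 < r → |ψ x - ψ y| ≤ K * (r ^ (β - finrank ℝ E / q) * B
        + r ^ (-(finrank ℝ E / q)) * (eLpNorm φ (ENNReal.ofReal q) μ).toReal) := by
  set γ := β - finrank ℝ E / q
  set c := μ.real (closedBall (0 : E) 1) ^ (-(1 / q))
  set K₁ := 6 ^ finrank ℝ E * 3 ^ β * c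
  set L := K₁ / (1 - 2⁻¹ ^ γ)
  have hc : 0 < c := Real.rpow_pos_of_pos (measureReal_closedBall_pos μ 0 one_pos) _
  have hL : 0 ≤ L := div_nonneg (by positivity)
    (sub_nonneg.2 (Real.rpow_le_one (by norm_num) (by norm_num) hγ.le))
  have hφi := hφq.locallyIntegrable (ENNReal.one_le_ofReal.2 hq)
  set F := fun r x => ⨍ z in closedBall x r, φ z ∂μ
  obtain ⟨ψ, hψφ, hψ⟩ := exists_ae_eq_abs_sub_setAverage_le hq hβ hB₀ hφ hφi hB hγ
  have hψF x r (hr : 0 < r) : |ψ x - F r x| ≤ L * r ^ γ * B :=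
    (hψ x r hr).trans_eq (by simp only [L, K₁, c]; ring)
  have tri x y a b : |ψ x - ψ y| ≤ |ψ x - a| + |a - b| + |ψ y - b| := by
    have := abs_sub_le (ψ x) a (ψ y); have := abs_sub_le a b (ψ y)
    rw [abs_sub_comm b] at this; linarith
  refine ⟨2 * L + K₁ + 2 * c, by positivity, ψ, hψφ, fun x y hxy => ?_, fun x y r hr => ?_⟩
  · have hd : 0 < dist x y := dist_pos.2 hxy
    have hF := abs_setAverage_sub_setAverage_le_of_le_two_mul hq hβ hB₀ hφ hφi hB hd le_rfl
      (by linarith) le_rfl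
    have := (tri x y (F (dist x y) x) (F (dist x y) y)).trans
      (add_le_add (add_le_add (hψF x _ hd) hF) (hψF y _ hd))
    have : 0 ≤ c * dist x y ^ γ * B := by positivity
    nlinarith
  · have hFx := abs_setAverage_le hq hφq x hr
    have hFy := abs_setAverage_le hq hφq y hr
    have := (tri x y (F r x) (F r y)).trans (add_le_add (add_le_add (hψF x r hr)
      ((abs_sub _ _).trans (add_le_add hFx hFy))) (hψF y r hr))
    have : 0 ≤ (K₁ + 2 * c) * (r ^ γ * B) := by positivity
    have : 0 ≤ (2 * L + K₁) * (r ^ (-(finrank ℝ E / q))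
      * (eLpNorm φ (ENNReal.ofReal q) μ).toReal) := by positivity
    nlinarith

theorem exists_ae_eq_abs_sub_le_mul_rpow (hq : 1 ≤ q) (hβ : 0 < β) (hB₀ : 0 ≤ B)
    (hφ : Measurable φ) (hφq : MemLp φ (ENNReal.ofReal q) μ) (hB : NikolskiiBounded μ q β B φ)
    {α : ℝ} (hα : 0 < α) (hαγ : α < β - finrank ℝ E / q) :
    ∃ C > (0 : ℝ), ∃ ψ : E → ℝ, ψ =ᵐ[μ] φ ∧ ∀ x y, x ≠ y →
      |ψ x - ψ y| ≤ C * B ^ ((α * q + finrank ℝ E) / (β * q))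
        * (eLpNorm φ (ENNReal.ofReal q) μ).toReal ^ (((β - α) * q - finrank ℝ E) / (β * q))
        * ‖x - y‖ ^ α := by
  obtain ⟨K, hK, ψ, hψφ, hsmall, hlarge⟩ :=
    exists_ae_eq_abs_sub_le_of_nikolskiiBounded hq hβ.le hB₀ hφ hφq hB (hα.trans hαγ)
  refine ⟨2 * K, by positivity, ψ, hψφ, fun x y hxy => ?_⟩
  have hq₀ : q ≠ 0 := by positivity
  have key := le_mul_rpow_of_le_of_forall_le ENNReal.toReal_nonneg hB₀ hK.le (dist_pos.2 hxy) hβ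
    hα.le hαγ (hsmall x y hxy) fun r hr => by
      rw [show β - finrank ℝ E / q - β = -(finrank ℝ E / q) by ring]; exact hlarge x y r hr
  have he₁ : 1 - (β - finrank ℝ E / q - α) / β = (α * q + finrank ℝ E) / (β * q) := by
    field_simp; ring
  have he₂ : (β - finrank ℝ E / q - α) / β = ((β - α) * q - finrank ℝ E) / (β * q) := by
    field_simp; ring
  rwa [he₁, he₂, dist_eq_norm] at key

end HaarMeasure

section Euclidean

variable {N : ℕ}

theorem nikolskiiSemi_congr_ae {β : ℝ} {p : ℝ≥0∞} {φ ψ : EuclideanSpace ℝ (Fin N) → ℝ}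
    (h : φ =ᵐ[volume] ψ) : nikolskiiSemi β p φ = nikolskiiSemi β p ψ := by
  refine iSup_congr fun k => eLpNorm_congr_ae ?_
  filter_upwards [h, (measurePreserving_add_right volume k.1).quasiMeasurePreserving.ae_eq h]
    with x hx hxk
  simp only [Function.comp_apply] at hxk
  rw [hx, hxk]

theorem nikolskiiBounded_nikolskiiSemi {β q : ℝ} {φ : EuclideanSpace ℝ (Fin N) → ℝ}
    (hfin : nikolskiiSemi β (ENNReal.ofReal q) φ ≠ ⊤) :
    NikolskiiBounded volume q β (nikolskiiSemi β (ENNReal.ofReal q) φ).toReal φ := by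
  intro k
  rw [ENNReal.ofReal_mul (by positivity), ENNReal.ofReal_toReal hfin]
  rcases eq_or_ne k 0 with rfl | hk
  · simp
  have hkβ : 0 < ‖k‖ ^ β := by positivity
  have hdiv : (fun v => φ (v + k) - φ v) = ‖k‖ ^ β • fun v => (φ (v + k) - φ v) / ‖k‖ ^ β := by
    ext v; simp [mul_div_cancel₀ _ hkβ.ne']
  rw [hdiv, eLpNorm_const_smul, Real.enorm_of_nonneg hkβ.le]
  gcongr
  exact le_iSup_of_le (⟨k, hk⟩ : {h : EuclideanSpace ℝ (Fin N) // h ≠ 0}) le_rfl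

end Euclidean

theorem stmt_8_general {N : ℕ} (β q : ℝ) (hβ : 0 < β) (hq : 1 ≤ q)
    (ψ : EuclideanSpace ℝ (Fin N) → ℝ)
    (hψ : MemLp ψ (ENNReal.ofReal q) volume)
    (hfin : nikolskiiSemi β (ENNReal.ofReal q) ψ ≠ ⊤) :
    ∀ α : ℝ, 0 < α → α < β - N / q →
      ∃ C > (0 : ℝ), ∃ ψ' : EuclideanSpace ℝ (Fin N) → ℝ,
        ψ' =ᵐ[volume] ψ ∧
        ∀ x y, x ≠ y →
          |ψ' x - ψ' y|
            ≤ C * (nikolskiiSemi β (ENNReal.ofReal q) ψ).toReal ^ ((α * q + N) / (β * q))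
              * (eLpNorm ψ (ENNReal.ofReal q) volume).toReal ^ (((β - α) * q - N) / (β * q))
              * ‖x - y‖ ^ α := by
  intro α hα hαγ
  set φ := hψ.1.mk ψ
  have hψφ : ψ =ᵐ[volume] φ := hψ.1.ae_eq_mk
  have hsemi : nikolskiiSemi β (ENNReal.ofReal q) φ = nikolskiiSemi β (ENNReal.ofReal q) ψ :=
    nikolskiiSemi_congr_ae hψφ.symm
  obtain ⟨C, hC, ψ', hψ'φ, hψ'⟩ := exists_ae_eq_abs_sub_le_mul_rpow hq hβ ENNReal.toReal_nonneg
    hψ.1.stronglyMeasurable_mk.measurable (hψ.ae_eq hψφ)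
    (nikolskiiBounded_nikolskiiSemi (hsemi ▸ hfin)) hα
    (by rwa [finrank_euclideanSpace_fin])
  refine ⟨C, hC, ψ', hψ'φ.trans hψφ.symm, fun x y hxy => ?_⟩
  have := hψ' x y hxy
  rwa [hsemi, eLpNorm_congr_ae hψφ.symm, finrank_euclideanSpace_fin] at this

/-- Morrey-type embedding: if `0 < β < 1`, `1 ≤ q < ∞` with `βq > N`, and
`ψ ∈ L^q(ℝ^N)` has finite Besov–Nikolskii seminorm, then for every
`0 < α < β − N/q` there is a constant `C = C(N,q,α,β)` and a representative of
`ψ` which is `α`-Hölder continuous with the interpolation estimate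
`|ψ(x)−ψ(y)| ≤ C [ψ]_N^{(αq+N)/(βq)} ‖ψ‖_{L^q}^{((β−α)q−N)/(βq)} |x−y|^α`. -/
theorem stmt_8 {N : ℕ} (β q : ℝ) (hβ : 0 < β) (hβ1 : β < 1) (hq : 1 ≤ q)
    (hβq : (N : ℝ) < β * q)
    (ψ : EuclideanSpace ℝ (Fin N) → ℝ)
    (hψ : MemLp ψ (ENNReal.ofReal q) volume)
    (hfin : nikolskiiSemi β (ENNReal.ofReal q) ψ ≠ ⊤) :
    ∀ α : ℝ, 0 < α → α < β - N / q →
      ∃ C > (0 : ℝ), ∃ ψ' : EuclideanSpace ℝ (Fin N) → ℝ,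
        ψ' =ᵐ[volume] ψ ∧
        ∀ x y, x ≠ y →
          |ψ' x - ψ' y|
            ≤ C * (nikolskiiSemi β (ENNReal.ofReal q) ψ).toReal ^ ((α * q + N) / (β * q))
              * (eLpNorm ψ (ENNReal.ofReal q) volume).toReal ^ (((β - α) * q - N) / (β * q))
              * ‖x - y‖ ^ α :=
  stmt_8_general β q hβ hq ψ hψ hfin
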